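/- arXiv:1701.01396 — 5 statements merged into one kernel-verified Lean document; each statement's English description precedes it below -/
import Mathlib

section
/- There exists L ∈ S₁ such that Q = L² if and only if Dᵢ = 0 for all i = 1, …, 6. ([VVe1], Theorem on μ-rank in three variables, part (a).) -/
/-!
Write `L = α z₁ + β z₂ + γ z₃`. The relations give
`L² = α² z₁² + β² z₂² + γ² z₃² + (1 + μ₁₂) αβ z₁z₂ + (1 + μ₁₃) αγ z₁z₃ + (1 + μ₂₃) βγ z₂z₃`,
and the ordered monomials `zᵢzⱼ` (`i ≤ j`) are linearly independent: `S` acts on the span of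
the ordered monomials by twisted shifts, which satisfy the defining relations. So `Q = L²` means
`a = α², b = β², c = γ², 2d = (1 + μ₁₂) αβ, 2e = (1 + μ₁₃) αγ, 2f = (1 + μ₂₃) βγ`.
These force every `Dᵢ` to vanish. Conversely take `α = √a` and `β`, `γ` solving the equations
for `d` and `e` (possible by `D₁`, `D₂`); if `(1 + μ₁₂) α` or `(1 + μ₁₃) α` vanishes, the
corresponding root is free up to sign and `D₃` fixes the sign, and otherwise `D₄` gives the
equation for `f`.
-/

noncomputable section

/-- The defining relations of the skew polynomial algebra `S`:
`z_j z_i = μ_{ij} • (z_i z_j)` for all `i, j`. -/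
inductive SkewRel (k : Type*) [CommRing k] (n : ℕ) (μ : Fin n → Fin n → k) :
    FreeAlgebra k (Fin n) → FreeAlgebra k (Fin n) → Prop
  | rel (i j : Fin n) : SkewRel k n μ
      (FreeAlgebra.ι k j * FreeAlgebra.ι k i)
      (μ i j • (FreeAlgebra.ι k i * FreeAlgebra.ι k j))

/-- The skew polynomial algebra `S`, a quotient of the free algebra on `n`
generators by the two-sided ideal generated by the skew-commutation relations. -/
abbrev SkewAlg (k : Type*) [CommRing k] (n : ℕ) (μ : Fin n → Fin n → k) :=
  RingQuot (SkewRel k n μ)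

/-- The degree-one generators `z_i` of `S`. -/
def zgen (k : Type*) [CommRing k] (n : ℕ) (μ : Fin n → Fin n → k) (i : Fin n) :
    SkewAlg k n μ :=
  RingQuot.mkAlgHom k (SkewRel k n μ) (FreeAlgebra.ι k i)

namespace SkewAlg

open Finsupp

section Representation

variable {k : Type*} [CommRing k] {n : ℕ} (μ : Fin n → Fin n → k)

/-- In the basis of ordered monomials `z^m = z₀^{m₀} ⋯ z_{n-1}^{m_{n-1}}`, moving `z_i` past the
`z_l` with `l < i` gives `z_i z^m = twist μ i m • z^(m + eᵢ)`. -/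
def twist (i : Fin n) (m : Fin n →₀ ℕ) : k := ∏ l ∈ Finset.Iio i, μ l i ^ m l

@[simp] lemma twist_zero (i : Fin n) : twist μ i 0 = 1 := by simp [twist]

lemma twist_add_single (i j : Fin n) (m : Fin n →₀ ℕ) :
    twist μ j (m + single i 1) = twist μ j m * if i < j then μ i j else 1 := by
  simp only [twist, Finsupp.add_apply, pow_add, Finset.prod_mul_distrib, single_apply, pow_ite,
    pow_one, pow_zero, Finset.prod_ite_eq, Finset.mem_Iio]

lemma twist_single (i j : Fin n) : twist μ j (single i 1) = if i < j then μ i j else 1 := by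
  simpa using twist_add_single μ i j 0

def leftMul (i : Fin n) : Module.End k ((Fin n →₀ ℕ) →₀ k) :=
  lsum k fun m => twist μ i m • lsingle (m + single i 1)

@[simp] lemma leftMul_single (i : Fin n) (m : Fin n →₀ ℕ) (x : k) :
    leftMul μ i (single m x) = single (m + single i 1) (twist μ i m * x) := by
  simp [leftMul, smul_single]

variable {μ} (hμd : ∀ i, μ i i = 1) (hμi : ∀ i j, μ i j * μ j i = 1)
include hμd hμi

lemma leftMul_comm (i j : Fin n) :
    leftMul μ j * leftMul μ i = μ i j • (leftMul μ i * leftMul μ j) := by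
  refine lhom_ext fun m x => ?_
  simp only [Module.End.mul_apply, LinearMap.smul_apply, leftMul_single, smul_single,
    smul_eq_mul, add_right_comm m (single i 1) (single j 1), twist_add_single]
  congr 1
  rcases lt_trichotomy i j with h | rfl | h
  · simp [h, not_lt.2 h.le]
    ring
  · simp [hμd]
  · simp only [h, not_lt.2 h.le, if_true, if_false]
    linear_combination -(twist μ j m * (twist μ i m * x)) * hμi i j

/-- `S` acting on the span of its ordered monomials by left multiplication. -/
def monomialRep : SkewAlg k n μ →ₐ[k] Module.End k ((Fin n →₀ ℕ) →₀ k) :=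
  RingQuot.liftAlgHom k ⟨FreeAlgebra.lift k (leftMul μ), by
    rintro _ _ ⟨i, j⟩
    simpa only [map_mul, map_smul, FreeAlgebra.lift_ι_apply] using leftMul_comm hμd hμi i j⟩

@[simp] lemma monomialRep_zgen (i : Fin n) :
    monomialRep hμd hμi (zgen k n μ i) = leftMul μ i := by
  rw [zgen, monomialRep, RingQuot.liftAlgHom_mkAlgHom_apply, FreeAlgebra.lift_ι_apply]

/-- The coordinates of an element of `S` in the basis of ordered monomials. -/
def coeffs : SkewAlg k n μ →ₗ[k] (Fin n →₀ ℕ) →₀ k :=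
  LinearMap.applyₗ (single 0 1) ∘ₗ (monomialRep hμd hμi).toLinearMap

lemma coeffs_zgen_mul_zgen {i j : Fin n} (hij : i ≤ j) :
    coeffs hμd hμi (zgen k n μ i * zgen k n μ j) = single (single i 1 + single j 1) 1 := by
  simp [coeffs, twist_single, not_lt.2 hij, add_comm (single j 1)]

end Representation

lemma zgen_mul_comm {k : Type*} [CommRing k] {n : ℕ} (μ : Fin n → Fin n → k) (i j : Fin n) :
    zgen k n μ j * zgen k n μ i = μ i j • (zgen k n μ i * zgen k n μ j) := by
  simpa only [zgen, map_mul, map_smul] using RingQuot.mkAlgHom_rel k (SkewRel.rel (μ := μ) i j)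

lemma single_one_add_single_one_eq_iff {ι : Type*} {i j i' j' : ι} :
    single i 1 + single j 1 = (single i' 1 + single j' 1 : ι →₀ ℕ) ↔
      i = i' ∧ j = j' ∨ i = j' ∧ j = i' := by
  simp [single_add_single_eq_single_add_single]

section ThreeVariables

variable {k : Type*} [CommRing k] (μ : Fin 3 → Fin 3 → k)

local notation "z" => zgen k 3 μ

def quadratic (a b c u v w : k) : SkewAlg k 3 μ :=
  a • z 0 ^ 2 + b • z 1 ^ 2 + c • z 2 ^ 2 + u • (z 0 * z 1) + v • (z 0 * z 2) + w • (z 1 * z 2)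

lemma sq_eq_quadratic (α β γ : k) :
    (α • z 0 + β • z 1 + γ • z 2) ^ 2 = quadratic μ (α * α) (β * β) (γ * γ)
      ((1 + μ 0 1) * (α * β)) ((1 + μ 0 2) * (α * γ)) ((1 + μ 1 2) * (β * γ)) := by
  simp only [quadratic, pow_two, add_mul, mul_add, smul_mul_assoc, mul_smul_comm, smul_smul,
    zgen_mul_comm μ 0 1, zgen_mul_comm μ 0 2, zgen_mul_comm μ 1 2]
  module

variable {μ} (hμd : ∀ i, μ i i = 1) (hμi : ∀ i j, μ i j * μ j i = 1)
include hμd hμi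

lemma quadratic_injective {a b c u v w a' b' c' u' v' w' : k}
    (h : quadratic μ a b c u v w = quadratic μ a' b' c' u' v' w') :
    a = a' ∧ b = b' ∧ c = c' ∧ u = u' ∧ v = v' ∧ w = w' := by
  have hc := congrArg (coeffs hμd hμi) h
  simp (disch := decide) only [quadratic, pow_two, map_add, map_smul, coeffs_zgen_mul_zgen,
    smul_single, smul_eq_mul, mul_one] at hc
  have coeff_eq (i j : Fin 3) := DFunLike.congr_fun hc (single i 1 + single j 1)
  simp only [Finsupp.add_apply, single_apply, single_one_add_single_one_eq_iff] at coeff_eq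
  exact ⟨by simpa using coeff_eq 0 0, by simpa using coeff_eq 1 1, by simpa using coeff_eq 2 2,
    by simpa using coeff_eq 0 1, by simpa using coeff_eq 0 2, by simpa using coeff_eq 1 2⟩

lemma quadratic_eq_sq_iff {a b c u v w : k} (α β γ : k) :
    quadratic μ a b c u v w = (α • z 0 + β • z 1 + γ • z 2) ^ 2 ↔
      a = α * α ∧ b = β * β ∧ c = γ * γ ∧ u = (1 + μ 0 1) * (α * β) ∧
        v = (1 + μ 0 2) * (α * γ) ∧ w = (1 + μ 1 2) * (β * γ) := by
  rw [sq_eq_quadratic]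
  refine ⟨quadratic_injective hμd hμi, ?_⟩
  rintro ⟨rfl, rfl, rfl, rfl, rfl, rfl⟩
  rfl

end ThreeVariables

end SkewAlg

lemma exists_eq_mul_self_and_eq_mul {R : Type*} [CommRing R] [NoZeroDivisors R] {b u w : R}
    (hb : IsSquare b) (h : w ^ 2 = u ^ 2 * b) : ∃ β, b = β * β ∧ w = u * β := by
  obtain ⟨β, rfl⟩ := hb
  rcases sq_eq_sq_iff_eq_or_eq_neg.1 (h.trans (by ring) : w ^ 2 = (u * β) ^ 2) with hw | hw
  · exact ⟨β, rfl, hw⟩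
  · exact ⟨-β, by ring, by rw [hw]; ring⟩

section SquareCoefficients

variable {k : Type*} [Field k] {p q r a b c d e f : k}

lemma relations_of_sq_coeffs (h2 : (2 : k) ≠ 0) {α β γ : k} (ha : a = α * α) (hb : b = β * β)
    (hc : c = γ * γ) (hd : 2 * d = p * (α * β)) (he : 2 * e = q * (α * γ))
    (hf : 2 * f = r * (β * γ)) :
    4 * d ^ 2 - p ^ 2 * (a * b) = 0 ∧ 4 * e ^ 2 - q ^ 2 * (a * c) = 0 ∧
      4 * f ^ 2 - r ^ 2 * (b * c) = 0 ∧ 2 * r * (d * e) - p * q * (a * f) = 0 ∧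
      2 * p * (e * f) - q * r * (c * d) = 0 ∧ 2 * q * (d * f) - p * r * (b * e) = 0 := by
  subst ha hb hc
  refine ⟨by linear_combination (2 * d + p * (α * β)) * hd,
    by linear_combination (2 * e + q * (α * γ)) * he,
    by linear_combination (2 * f + r * (β * γ)) * hf,
    mul_left_cancel₀ h2 ?_, mul_left_cancel₀ h2 ?_, mul_left_cancel₀ h2 ?_⟩
  · linear_combination r * (2 * e) * hd + r * p * (α * β) * he - p * q * (α * α) * hf
  · linear_combination p * (2 * f) * he + p * q * (α * γ) * hf - q * r * (γ * γ) * hd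
  · linear_combination q * (2 * f) * hd + q * p * (α * β) * hf - p * r * (β * β) * he

lemma exists_sq_coeffs_of_relations [IsAlgClosed k] (D1 : 4 * d ^ 2 - p ^ 2 * (a * b) = 0)
    (D2 : 4 * e ^ 2 - q ^ 2 * (a * c) = 0) (D3 : 4 * f ^ 2 - r ^ 2 * (b * c) = 0)
    (D4 : 2 * r * (d * e) - p * q * (a * f) = 0) :
    ∃ α β γ : k, a = α * α ∧ b = β * β ∧ c = γ * γ ∧
      2 * d = p * (α * β) ∧ 2 * e = q * (α * γ) ∧ 2 * f = r * (β * γ) := by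
  obtain ⟨α, rfl⟩ := IsAlgClosed.exists_eq_mul_self a
  have hd2 : (2 * d) ^ 2 = (p * α) ^ 2 * b := by linear_combination D1
  have he2 : (2 * e) ^ 2 = (q * α) ^ 2 * c := by linear_combination D2
  have hf2 : (2 * f) ^ 2 = r ^ 2 * (b * c) := by linear_combination D3
  by_cases hpα : p * α = 0
  · have hd : 2 * d = 0 := pow_eq_zero_iff two_ne_zero |>.1 (by simpa [hpα] using hd2)
    obtain ⟨γ, rfl, he⟩ := exists_eq_mul_self_and_eq_mul (IsAlgClosed.exists_eq_mul_self c) he2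
    obtain ⟨β, rfl, hf⟩ := exists_eq_mul_self_and_eq_mul (IsAlgClosed.exists_eq_mul_self b)
      (hf2.trans (by ring) : (2 * f) ^ 2 = (r * γ) ^ 2 * b)
    exact ⟨α, β, γ, rfl, rfl, rfl, by linear_combination hd - β * hpα,
      by linear_combination he, by linear_combination hf⟩
  by_cases hqα : q * α = 0
  · have he : 2 * e = 0 := pow_eq_zero_iff two_ne_zero |>.1 (by simpa [hqα] using he2)
    obtain ⟨β, rfl, hd⟩ := exists_eq_mul_self_and_eq_mul (IsAlgClosed.exists_eq_mul_self b) hd2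
    obtain ⟨γ, rfl, hf⟩ := exists_eq_mul_self_and_eq_mul (IsAlgClosed.exists_eq_mul_self c)
      (hf2.trans (by ring) : (2 * f) ^ 2 = (r * β) ^ 2 * c)
    exact ⟨α, β, γ, rfl, rfl, rfl, by linear_combination hd,
      by linear_combination he - γ * hqα, by linear_combination hf⟩
  obtain ⟨β, rfl, hd⟩ := exists_eq_mul_self_and_eq_mul (IsAlgClosed.exists_eq_mul_self b) hd2
  obtain ⟨γ, rfl, he⟩ := exists_eq_mul_self_and_eq_mul (IsAlgClosed.exists_eq_mul_self c) he2
  refine ⟨α, β, γ, rfl, rfl, rfl, by linear_combination hd, by linear_combination he,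
    mul_left_cancel₀ (mul_ne_zero hpα hqα) ?_⟩
  linear_combination -2 * D4 + r * (2 * e) * hd + r * p * (α * β) * he

lemma exists_sq_coeffs_iff [IsAlgClosed k] (h2 : (2 : k) ≠ 0) :
    (∃ α β γ : k, a = α * α ∧ b = β * β ∧ c = γ * γ ∧
        2 * d = p * (α * β) ∧ 2 * e = q * (α * γ) ∧ 2 * f = r * (β * γ)) ↔
      (4 * d ^ 2 - p ^ 2 * (a * b) = 0 ∧ 4 * e ^ 2 - q ^ 2 * (a * c) = 0 ∧
        4 * f ^ 2 - r ^ 2 * (b * c) = 0 ∧ 2 * r * (d * e) - p * q * (a * f) = 0 ∧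
        2 * p * (e * f) - q * r * (c * d) = 0 ∧ 2 * q * (d * f) - p * r * (b * e) = 0) :=
  ⟨fun ⟨_, _, _, ha, hb, hc, hd, he, hf⟩ => relations_of_sq_coeffs h2 ha hb hc hd he hf,
    fun ⟨D1, D2, D3, D4, _, _⟩ => exists_sq_coeffs_of_relations D1 D2 D3 D4⟩

end SquareCoefficients

theorem stmt0_general (k : Type*) [Field k] [IsAlgClosed k] (hchar : (2 : k) ≠ 0)
    (μ : Fin 3 → Fin 3 → k)
    (hμd : ∀ i, μ i i = 1)
    (hμi : ∀ i j, μ i j * μ j i = 1)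
    (a b c d e f : k)
    (z : Fin 3 → SkewAlg k 3 μ) (hz : z = zgen k 3 μ)
    (Q : SkewAlg k 3 μ)
    (hQ : Q = a • (z 0) ^ 2 + b • (z 1) ^ 2 + c • (z 2) ^ 2 +
      (2 * d) • (z 0 * z 1) + (2 * e) • (z 0 * z 2) + (2 * f) • (z 1 * z 2)) :
    (∃ L ∈ Submodule.span k (Set.range z), Q = L ^ 2) ↔
      (4 * d ^ 2 - (1 + μ 0 1) ^ 2 * (a * b) = 0 ∧
       4 * e ^ 2 - (1 + μ 0 2) ^ 2 * (a * c) = 0 ∧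
       4 * f ^ 2 - (1 + μ 1 2) ^ 2 * (b * c) = 0 ∧
       2 * (1 + μ 1 2) * (d * e) - (1 + μ 0 1) * (1 + μ 0 2) * (a * f) = 0 ∧
       2 * (1 + μ 0 1) * (e * f) - (1 + μ 0 2) * (1 + μ 1 2) * (c * d) = 0 ∧
       2 * (1 + μ 0 2) * (d * f) - (1 + μ 0 1) * (1 + μ 1 2) * (b * e) = 0) := by
  subst hz hQ
  rw [← exists_sq_coeffs_iff hchar]
  simp only [Submodule.mem_span_range_iff_exists_fun, Fin.sum_univ_three]
  constructor
  · rintro ⟨L, ⟨g, rfl⟩, hL⟩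
    exact ⟨g 0, g 1, g 2, (SkewAlg.quadratic_eq_sq_iff hμd hμi _ _ _).1 hL⟩
  · rintro ⟨α, β, γ, h⟩
    exact ⟨_, ⟨![α, β, γ], rfl⟩, (SkewAlg.quadratic_eq_sq_iff hμd hμi α β γ).2 h⟩

theorem stmt0 (k : Type*) [Field k] [IsAlgClosed k] (hchar : (2 : k) ≠ 0)
    (μ : Fin 3 → Fin 3 → k)
    (hμ0 : ∀ i j, μ i j ≠ 0)
    (hμd : ∀ i, μ i i = 1)
    (hμi : ∀ i j, μ i j * μ j i = 1)
    (a b c d e f : k)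
    (z : Fin 3 → SkewAlg k 3 μ) (hz : z = zgen k 3 μ)
    (Q : SkewAlg k 3 μ)
    (hQ : Q = a • (z 0) ^ 2 + b • (z 1) ^ 2 + c • (z 2) ^ 2 +
      (2 * d) • (z 0 * z 1) + (2 * e) • (z 0 * z 2) + (2 * f) • (z 1 * z 2)) :
    (∃ L ∈ Submodule.span k (Set.range z), Q = L ^ 2) ↔
      (4 * d ^ 2 - (1 + μ 0 1) ^ 2 * (a * b) = 0 ∧
       4 * e ^ 2 - (1 + μ 0 2) ^ 2 * (a * c) = 0 ∧
       4 * f ^ 2 - (1 + μ 1 2) ^ 2 * (b * c) = 0 ∧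
       2 * (1 + μ 1 2) * (d * e) - (1 + μ 0 1) * (1 + μ 0 2) * (a * f) = 0 ∧
       2 * (1 + μ 0 1) * (e * f) - (1 + μ 0 2) * (1 + μ 1 2) * (c * d) = 0 ∧
       2 * (1 + μ 0 2) * (d * f) - (1 + μ 0 1) * (1 + μ 1 2) * (b * e) = 0) :=
  stmt0_general k hchar μ hμd hμi a b c d e f z hz Q hQ

end
end

section
/- Suppose a ≠ 0. Then there exist L₁, L₂ ∈ S₁ such that Q = L₁L₂ if and only if there exist X, Y ∈ k with X² = d² − μ₁₂ab and Y² = e² − μ₁₃ac such that D₈ = μ₂₁(d + X)(e − Y) + μ₂₃μ₃₁(d − X)(e + Y) − 2af = 0. ([VVe1], Theorem on μ-rank in three variables, part (b)(ii).) -/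
/-!
STATEMENT 2: With S and Q as in STATEMENT 0 and a ≠ 0, there exist
L₁, L₂ ∈ S₁ with Q = L₁L₂ iff there exist X, Y ∈ k with
X² = d² − μ₁₂ab and Y² = e² − μ₁₃ac such that
D₈ = μ₂₁(d + X)(e − Y) + μ₂₃μ₃₁(d − X)(e + Y) − 2af = 0.
-/

noncomputable section

variable (k : Type*) [CommRing k] (μ : Fin 3 → Fin 3 → k)

/-- scaling algebra endomorphism -/
def sg (i : Fin 3) : MvPolynomial (Fin 3) k →ₐ[k] MvPolynomial (Fin 3) k :=
  MvPolynomial.aeval (fun j => (if j < i then μ j i else 1) • MvPolynomial.X j)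

@[simp] lemma sg_X (i j : Fin 3) :
    sg k μ i (MvPolynomial.X j) = (if j < i then μ j i else 1) • MvPolynomial.X j := by
  simp [sg]

def Zop (i : Fin 3) : Module.End k (MvPolynomial (Fin 3) k) :=
  (LinearMap.mulLeft k (MvPolynomial.X i)).comp (sg k μ i).toLinearMap

lemma Zop_apply (i : Fin 3) (p : MvPolynomial (Fin 3) k) :
    Zop k μ i p = MvPolynomial.X i * sg k μ i p := rfl

lemma sg_comm (i j : Fin 3) (p : MvPolynomial (Fin 3) k) :
    sg k μ i (sg k μ j p) = sg k μ j (sg k μ i p) := by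
  have : (sg k μ i).comp (sg k μ j) = (sg k μ j).comp (sg k μ i) := by
    apply MvPolynomial.algHom_ext
    intro l
    simp only [AlgHom.comp_apply, sg_X, map_smul]
    split_ifs <;> simp [smul_smul, mul_comm]
  exact congrArg (fun g => DFunLike.coe g p) this

lemma Zop_rel (hμd : ∀ i, μ i i = 1) (hμi : ∀ i j, μ i j * μ j i = 1) (i j : Fin 3) :
    Zop k μ j * Zop k μ i = μ i j • (Zop k μ i * Zop k μ j) := by
  apply LinearMap.ext; intro p
  simp only [Module.End.mul_apply, LinearMap.smul_apply, Zop_apply, map_mul, sg_X]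
  rw [sg_comm]
  rcases lt_trichotomy i j with h | h | h
  · rw [if_pos h, if_neg (asymm h)]
    simp only [smul_mul_assoc, mul_smul_comm, one_smul]
    rw [mul_left_comm]
  · subst h
    simp [hμd i]
  · rw [if_neg (asymm h), if_pos h]
    simp only [smul_mul_assoc, mul_smul_comm, one_smul, smul_smul]
    rw [hμi i j, one_smul, mul_left_comm]

def Phi (hμd : ∀ i, μ i i = 1) (hμi : ∀ i j, μ i j * μ j i = 1) :
    SkewAlg k 3 μ →ₐ[k] Module.End k (MvPolynomial (Fin 3) k) :=
  RingQuot.liftAlgHom k ⟨FreeAlgebra.lift k (Zop k μ), by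
    rintro x y ⟨i, j⟩
    simp [Zop_rel k μ hμd hμi i j]⟩

lemma Phi_z (hμd : ∀ i, μ i i = 1) (hμi : ∀ i j, μ i j * μ j i = 1) (i : Fin 3) :
    Phi k μ hμd hμi (zgen k 3 μ i) = Zop k μ i := by
  rw [zgen, Phi, RingQuot.liftAlgHom_mkAlgHom_apply]
  simp

end

section More
variable (k : Type*) [CommRing k] (μ : Fin 3 → Fin 3 → k)

lemma Phi_zz (hμd : ∀ i, μ i i = 1) (hμi : ∀ i j, μ i j * μ j i = 1) (i j : Fin 3) :
    Phi k μ hμd hμi (zgen k 3 μ i * zgen k 3 μ j) 1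
      = (if j < i then μ j i else 1) • (MvPolynomial.X i * MvPolynomial.X j) := by
  rw [map_mul, Phi_z, Phi_z]
  simp only [Module.End.mul_apply, Zop_apply, map_one, mul_one, sg_X, map_smul, mul_smul_comm]

lemma zrel (i j : Fin 3) :
    zgen k 3 μ j * zgen k 3 μ i = μ i j • (zgen k 3 μ i * zgen k 3 μ j) := by
  unfold zgen
  rw [← map_mul, ← map_mul, ← map_smul]
  exact RingQuot.mkAlgHom_rel k (SkewRel.rel i j)

end More

theorem stmt2 (k : Type*) [Field k] [IsAlgClosed k] (hchar : (2 : k) ≠ 0)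
    (μ : Fin 3 → Fin 3 → k)
    (hμ0 : ∀ i j, μ i j ≠ 0)
    (hμd : ∀ i, μ i i = 1)
    (hμi : ∀ i j, μ i j * μ j i = 1)
    (a b c d e f : k) (ha : a ≠ 0)
    (z : Fin 3 → SkewAlg k 3 μ) (hz : z = zgen k 3 μ)
    (Q : SkewAlg k 3 μ)
    (hQ : Q = a • (z 0) ^ 2 + b • (z 1) ^ 2 + c • (z 2) ^ 2 +
      (2 * d) • (z 0 * z 1) + (2 * e) • (z 0 * z 2) + (2 * f) • (z 1 * z 2)) :
    (∃ L₁ ∈ Submodule.span k (Set.range z), ∃ L₂ ∈ Submodule.span k (Set.range z),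
        Q = L₁ * L₂) ↔
      ∃ X Y : k, X ^ 2 = d ^ 2 - μ 0 1 * (a * b) ∧ Y ^ 2 = e ^ 2 - μ 0 2 * (a * c) ∧
        μ 1 0 * ((d + X) * (e - Y)) + μ 1 2 * μ 2 0 * ((d - X) * (e + Y)) -
          2 * (a * f) = 0 := by
  subst hz
  set z := zgen k 3 μ with hz
  have zr : ∀ i j : Fin 3, z j * z i = μ i j • (z i * z j) := zrel k μ
  simp only [pow_two] at hQ
  constructor
  · rintro ⟨L₁, hL₁mem, L₂, hL₂mem, hfac⟩
    obtain ⟨α, hL₁⟩ := (Submodule.mem_span_range_iff_exists_fun k).mp hL₁mem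
    obtain ⟨β, hL₂⟩ := (Submodule.mem_span_range_iff_exists_fun k).mp hL₂mem
    have hm : a • (z 0 * z 0) + b • (z 1 * z 1) + c • (z 2 * z 2) +
        (2 * d) • (z 0 * z 1) + (2 * e) • (z 0 * z 2) + (2 * f) • (z 1 * z 2)
        = (∑ i, α i • z i) * (∑ i, β i • z i) := by
      rw [hL₁, hL₂, ← hQ, hfac]
    rw [Fin.sum_univ_three, Fin.sum_univ_three] at hm
    simp only [add_mul, mul_add, smul_mul_smul_comm] at hm
    have key : ∀ v0 v1 v2 : k,
        a * (v0 * v0) + b * (v1 * v1) + c * (v2 * v2) + 2 * d * (v0 * v1) +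
          2 * e * (v0 * v2) + 2 * f * (v1 * v2)
        = (α 0 * β 0) * (v0 * v0) + (α 0 * β 1) * (v0 * v1) + (α 0 * β 2) * (v0 * v2)
          + μ 0 1 * (α 1 * β 0) * (v0 * v1) + (α 1 * β 1) * (v1 * v1)
          + (α 1 * β 2) * (v1 * v2)
          + μ 0 2 * (α 2 * β 0) * (v0 * v2) + μ 1 2 * (α 2 * β 1) * (v1 * v2)
          + (α 2 * β 2) * (v2 * v2) := by
      intro v0 v1 v2
      have hmono : ∀ i j : Fin 3, Phi k μ hμd hμi (z i * z j) 1
          = (if j < i then μ j i else 1) • (MvPolynomial.X i * MvPolynomial.X j) :=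
        fun i j => Phi_zz k μ hμd hμi i j
      have h0 := congrArg (fun g => (Phi k μ hμd hμi g) 1) hm
      simp only [map_add, map_smul, LinearMap.add_apply, LinearMap.smul_apply, hmono] at h0
      have h1 := congrArg (MvPolynomial.aeval ![v0, v1, v2]) h0
      simp at h1
      linear_combination h1
    have e1 : a = α 0 * β 0 := by linear_combination key 1 0 0
    have e2 : b = α 1 * β 1 := by linear_combination key 0 1 0
    have e3 : c = α 2 * β 2 := by linear_combination key 0 0 1
    have e4 : 2 * d = α 0 * β 1 + μ 0 1 * (α 1 * β 0) := by
      linear_combination key 1 1 0 - key 1 0 0 - key 0 1 0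
    have e5 : 2 * e = α 0 * β 2 + μ 0 2 * (α 2 * β 0) := by
      linear_combination key 1 0 1 - key 1 0 0 - key 0 0 1
    have e6 : 2 * f = α 1 * β 2 + μ 1 2 * (α 2 * β 1) := by
      linear_combination key 0 1 1 - key 0 1 0 - key 0 0 1
    have hXp : d + (μ 0 1 * (α 1 * β 0) - d) = μ 0 1 * (α 1 * β 0) := by ring
    have hXm : d - (μ 0 1 * (α 1 * β 0) - d) = α 0 * β 1 := by linear_combination e4
    have hYp : e + (μ 0 2 * (α 2 * β 0) - e) = μ 0 2 * (α 2 * β 0) := by ring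
    have hYm : e - (μ 0 2 * (α 2 * β 0) - e) = α 0 * β 2 := by linear_combination e5
    refine ⟨μ 0 1 * (α 1 * β 0) - d, μ 0 2 * (α 2 * β 0) - e, ?_, ?_, ?_⟩
    · have hprod : (d + (μ 0 1 * (α 1 * β 0) - d)) * (d - (μ 0 1 * (α 1 * β 0) - d))
          = μ 0 1 * (α 1 * β 0) * (α 0 * β 1) := by rw [hXp, hXm]
      rw [e1, e2]
      linear_combination (-1 : k) * hprod
    · have hprod : (e + (μ 0 2 * (α 2 * β 0) - e)) * (e - (μ 0 2 * (α 2 * β 0) - e))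
          = μ 0 2 * (α 2 * β 0) * (α 0 * β 2) := by rw [hYp, hYm]
      rw [e1, e3]
      linear_combination (-1 : k) * hprod
    · rw [hXp, hXm, hYp, hYm, e1]
      linear_combination (α 1 * β 0 * (α 0 * β 2)) * hμi 1 0
        + (μ 1 2 * (α 0 * β 1) * (α 2 * β 0)) * hμi 2 0 - (α 0 * β 0) * e6
  · rintro ⟨X, Y, hX, hY, hD⟩
    refine ⟨(1 : k) • z 0 + (μ 1 0 * (d + X) / a) • z 1 + (μ 2 0 * (e + Y) / a) • z 2,
      ?_, a • z 0 + (d - X) • z 1 + (e - Y) • z 2, ?_, ?_⟩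
    · refine Submodule.add_mem _ (Submodule.add_mem _ ?_ ?_) ?_ <;>
        exact Submodule.smul_mem _ _ (Submodule.subset_span ⟨_, rfl⟩)
    · refine Submodule.add_mem _ (Submodule.add_mem _ ?_ ?_) ?_ <;>
        exact Submodule.smul_mem _ _ (Submodule.subset_span ⟨_, rfl⟩)
    · rw [hQ]
      simp only [add_mul, mul_add, smul_mul_smul_comm]
      rw [zr 0 1, zr 0 2, zr 1 2]
      simp only [smul_smul]
      have hainv : a * a⁻¹ = 1 := mul_inv_cancel₀ ha
      match_scalars
      · ring
      · linear_combination (μ 1 0 * a⁻¹) * hX - (b * (a * a⁻¹)) * hμi 1 0 - b * hainv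
      · linear_combination (μ 2 0 * a⁻¹) * hY - (c * (a * a⁻¹)) * hμi 2 0 - c * hainv
      · linear_combination (-((d + X) * (a * a⁻¹))) * hμi 1 0 + (-(d + X)) * hainv
      · linear_combination (-((e + Y) * (a * a⁻¹))) * hμi 2 0 + (-(e + Y)) * hainv
      · linear_combination (-(a⁻¹)) * hD + (-(2 * f)) * hainv
end

section
/- If Q and Q′ are linearly independent quadratic forms in R₂, then either every nonzero element of kQ + kQ′ has rank at most two, or the set of one-dimensional k-subspaces of kQ + kQ′ that are spanned by a form of rank at most two has at most three elements. ([SV], Lemma 2.3, first assertion.) -/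
/-!
Since char k ≠ 2, every form of R₂ is xᵀNx for a unique symmetric N, so the rank of a member of
the pencil is the rank of its matrix. Suppose some member p₀ = xᵀN₀x has rank at least three and
some member p₁ = xᵀN₁x has rank at most two. Then p₀ and p₁ span the pencil, and every member of
rank at most two is, up to a scalar, xᵀ(tN₀ + N₁)x for a t at which a fixed nonsingular 3 × 3
minor of N₀ becomes singular in tN₀ + N₁. That minor is a cubic polynomial in t whose leading
coefficient is the nonzero minor of N₀, so at most three values of t occur.
-/

noncomputable section

open MvPolynomial

/-- The quadratic form `xᵀNx` associated to a 4×4 matrix `N`. -/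
def quadOfMat (k : Type*) [Field k] (N : Matrix (Fin 4) (Fin 4) k) :
    MvPolynomial (Fin 4) k :=
  ∑ i, ∑ j, N i j • (X i * X j)

/-- `q` has rank exactly `r`: the (unique, as char k ≠ 2) symmetric matrix `N`
with `q = xᵀNx` has rank `r`. -/
def HasRank (k : Type*) [Field k] (q : MvPolynomial (Fin 4) k) (r : ℕ) : Prop :=
  ∃ N : Matrix (Fin 4) (Fin 4) k, N.IsSymm ∧ q = quadOfMat k N ∧ N.rank = r

/-- `q` has rank at most `r`. -/
def HasRankLE (k : Type*) [Field k] (q : MvPolynomial (Fin 4) k) (r : ℕ) : Prop :=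
  ∃ N : Matrix (Fin 4) (Fin 4) k, N.IsSymm ∧ q = quadOfMat k N ∧ N.rank ≤ r

namespace Matrix

variable {m n K : Type*} [Field K] [Fintype n]

theorem rank_smul_le [Fintype m] (c : K) (A : Matrix m n K) : (c • A).rank ≤ A.rank := by
  classical
  simpa using rank_mul_le_right (c • (1 : Matrix m m K)) A

theorem rank_smul_of_ne_zero {c : K} (hc : c ≠ 0) (A : Matrix m n K) : (c • A).rank = A.rank :=
  A.rank_smul_of_mem_nonZeroDivisors (mem_nonZeroDivisors_of_ne_zero hc)

theorem exists_linearIndependent_row_of_le_rank [Fintype m] (A : Matrix m n K) {d : ℕ}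
    (h : d ≤ A.rank) :
    ∃ r : Fin d → m, LinearIndependent K (A.submatrix r id).row := by
  obtain ⟨κ, a, ha, hspan, hli⟩ := exists_linearIndependent' K A.row
  have : Finite κ := Finite.of_injective a ha
  cases nonempty_fintype κ
  have hcard : Fintype.card κ = A.rank := by
    rw [linearIndependent_iff_card_eq_finrank_span.mp hli, Set.finrank, hspan,
      rank_eq_finrank_span_row]
  obtain ⟨e⟩ : Nonempty (Fin d ↪ κ) :=
    Function.Embedding.nonempty_of_card_le (by rwa [Fintype.card_fin, hcard])
  exact ⟨a ∘ e, hli.comp e e.injective⟩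

theorem exists_submatrix_det_ne_zero_of_le_rank [Fintype m] (A : Matrix m n K) {d : ℕ}
    (h : d ≤ A.rank) :
    ∃ (r : Fin d → m) (c : Fin d → n), (A.submatrix r c).det ≠ 0 := by
  obtain ⟨r, hr⟩ := A.exists_linearIndependent_row_of_le_rank h
  obtain ⟨c, hc⟩ := (A.submatrix r id)ᵀ.exists_linearIndependent_row_of_le_rank
    (by rw [rank_transpose, hr.rank_matrix, Fintype.card_fin])
  refine ⟨r, c, ?_⟩
  rw [← det_transpose]
  exact ((isUnit_iff_isUnit_det _).mp (linearIndependent_rows_iff_isUnit.mp hc)).ne_zero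

theorem det_submatrix_eq_zero_of_rank_lt (A : Matrix m n K) {d : ℕ} (h : A.rank < d)
    (r : Fin d → m) (c : Fin d → n) : (A.submatrix r c).det = 0 := by
  by_contra hdet
  have := (A.rank_submatrix_le r c).trans_lt h
  rw [rank_of_det_ne_zero hdet, Fintype.card_fin] at this
  exact this.false

open Polynomial in
theorem exists_finset_card_le_of_det_smul_add_eq_zero [DecidableEq n] {A : Matrix n n K}
    (hA : A.det ≠ 0) (B : Matrix n n K) :
    ∃ s : Finset K, s.card ≤ Fintype.card n ∧ ∀ t : K, (t • A + B).det = 0 → t ∈ s := by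
  classical
  set P : K[X] := det ((Polynomial.X : K[X]) • A.map Polynomial.C + B.map Polynomial.C)
  have hP : P ≠ 0 := fun h0 => hA <| by
    rw [← coeff_det_X_add_C_card A B]; simp [P, h0]
  refine ⟨P.roots.toFinset, (Multiset.toFinset_card_le _).trans
    ((card_roots' P).trans (natDegree_det_X_add_C_le A B)), fun t ht => ?_⟩
  rw [Multiset.mem_toFinset, mem_roots hP, IsRoot, ← coe_evalRingHom, RingHom.map_det]
  convert ht using 2
  ext i j
  simp only [map_apply, add_apply, smul_apply, smul_eq_mul, RingHom.mapMatrix_apply,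
    coe_evalRingHom, Polynomial.eval_add, Polynomial.eval_mul, Polynomial.eval_X,
    Polynomial.eval_C]

theorem exists_finset_card_le_of_rank_smul_add_lt [Fintype m] {A : Matrix m n K} {d : ℕ}
    (hA : d ≤ A.rank) (B : Matrix m n K) :
    ∃ s : Finset K, s.card ≤ d ∧ ∀ t : K, (t • A + B).rank < d → t ∈ s := by
  obtain ⟨r, c, hrc⟩ := A.exists_submatrix_det_ne_zero_of_le_rank hA
  obtain ⟨s, hs, hts⟩ := exists_finset_card_le_of_det_smul_add_eq_zero hrc (B.submatrix r c)
  refine ⟨s, by simpa using hs, fun t ht => hts t ?_⟩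
  simpa [submatrix_add, submatrix_smul] using (t • A + B).det_submatrix_eq_zero_of_rank_lt ht r c

end Matrix

theorem Submodule.span_pair_eq_of_linearIndependent {K V : Type*} [Field K] [AddCommGroup V]
    [Module K V] {x y u v : V} (hu : u ∈ span K {x, y}) (hv : v ∈ span K {x, y})
    (huv : LinearIndependent K ![u, v]) : span K {u, v} = span K {x, y} := by
  have : FiniteDimensional K (span K {x, y}) :=
    FiniteDimensional.span_of_finite K (Set.toFinite _)
  refine eq_of_le_of_finrank_le
    (span_le.mpr (Set.insert_subset hu (Set.singleton_subset_iff.mpr hv))) ?_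
  have h := finrank_span_eq_card huv
  have h' := finrank_range_le_card (R := K) ![x, y]
  rw [Set.finrank, Matrix.range_cons_cons_empty] at h'
  rw [Matrix.range_cons_cons_empty] at h
  simp only [Fintype.card_fin] at h h'
  omega

theorem Finsupp.exists_eq_single_add_single_of_degree_eq_two {α : Type*} {d : α →₀ ℕ}
    (hd : d.degree = 2) : ∃ i j, d = single i 1 + single j 1 := by
  classical
  obtain ⟨i, j, hij⟩ := Multiset.card_eq_two.mp (by rwa [Finsupp.card_toMultiset])
  refine ⟨i, j, ?_⟩
  apply_fun Multiset.toFinsupp at hij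
  simpa [← Multiset.singleton_add, Multiset.toFinsupp_add] using hij

theorem Set.finite_and_ncard_le_of_subset_image {α β : Type*} {S : Set β} {f : α → β}
    {s : Finset α} (h : S ⊆ f '' s) : S.Finite ∧ S.ncard ≤ s.card := by
  have hfin := s.finite_toSet.image f
  refine ⟨hfin.subset h, (Set.ncard_le_ncard h hfin).trans ?_⟩
  simpa using Set.ncard_image_le (f := f) s.finite_toSet

section QuadraticForms

open Matrix

variable {k : Type*} [Field k]

theorem quadOfMat_add (M N : Matrix (Fin 4) (Fin 4) k) :
    quadOfMat k (M + N) = quadOfMat k M + quadOfMat k N := by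
  simp [quadOfMat, add_smul, Finset.sum_add_distrib]

theorem quadOfMat_smul (c : k) (N : Matrix (Fin 4) (Fin 4) k) :
    quadOfMat k (c • N) = c • quadOfMat k N := by
  simp [quadOfMat, Finset.smul_sum, smul_smul]

theorem quadOfMat_single (i j : Fin 4) (c : k) :
    quadOfMat k (single i j c) = c • (X i * X j) := by
  simp [quadOfMat, single_apply, ite_and]

theorem eval_quadOfMat (N : Matrix (Fin 4) (Fin 4) k) (v : Fin 4 → k) :
    eval v (quadOfMat k N) = v ⬝ᵥ N *ᵥ v := by
  simp only [quadOfMat, map_sum, smul_eq_C_mul, map_mul, eval_C, eval_X, dotProduct, mulVec,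
    Finset.mul_sum]
  exact Finset.sum_congr rfl fun _ _ => Finset.sum_congr rfl fun _ _ => by ring

theorem eq_of_quadOfMat_eq_of_isSymm (hchar : (2 : k) ≠ 0) {M N : Matrix (Fin 4) (Fin 4) k}
    (hM : M.IsSymm) (hN : N.IsSymm) (h : quadOfMat k M = quadOfMat k N) : M = N := by
  have hq (v : Fin 4 → k) : v ⬝ᵥ M *ᵥ v = v ⬝ᵥ N *ᵥ v := by
    rw [← eval_quadOfMat, h, eval_quadOfMat]
  ext i j
  have hij := hq (Pi.single i 1 + Pi.single j 1)
  have hi := hq (Pi.single i 1)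
  have hj := hq (Pi.single j 1)
  simp only [mulVec_add, add_dotProduct, dotProduct_add, mulVec_single_one, single_dotProduct,
    one_mul, col_apply] at hij hi hj
  have hMji : M j i = M i j := hM.apply i j
  have hNji : N j i = N i j := hN.apply i j
  exact mul_left_cancel₀ hchar (by linear_combination hij - hi - hj - hMji + hNji)

theorem hasRankLE_quadOfMat_iff (hchar : (2 : k) ≠ 0) {N : Matrix (Fin 4) (Fin 4) k}
    (hN : N.IsSymm) {r : ℕ} : HasRankLE k (quadOfMat k N) r ↔ N.rank ≤ r := by
  refine ⟨fun ⟨M, hM, hMN, hr⟩ => ?_, fun hr => ⟨N, hN, rfl, hr⟩⟩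
  rwa [← eq_of_quadOfMat_eq_of_isSymm hchar hM hN hMN.symm]

variable (k) in
def symmetricForms : Submodule k (MvPolynomial (Fin 4) k) where
  carrier := {q | ∃ N : Matrix (Fin 4) (Fin 4) k, N.IsSymm ∧ q = quadOfMat k N}
  add_mem' := by
    rintro _ _ ⟨M, hM, rfl⟩ ⟨N, hN, rfl⟩
    exact ⟨M + N, hM.add hN, (quadOfMat_add M N).symm⟩
  zero_mem' := ⟨0, isSymm_zero, by simp [quadOfMat]⟩
  smul_mem' := by
    rintro c _ ⟨N, hN, rfl⟩
    exact ⟨c • N, hN.smul c, (quadOfMat_smul c N).symm⟩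

theorem X_mul_X_mem_symmetricForms (hchar : (2 : k) ≠ 0) (i j : Fin 4) :
    X i * X j ∈ symmetricForms k := by
  refine ⟨(2⁻¹ : k) • (single i j 1 + single j i 1), ?_, ?_⟩
  · simp [IsSymm, transpose_add, transpose_single, add_comm]
  · rw [quadOfMat_smul, quadOfMat_add, quadOfMat_single, quadOfMat_single, mul_comm (X j),
      ← two_smul k, smul_smul, one_smul, inv_mul_cancel₀ hchar, one_smul]

theorem mem_symmetricForms_of_mem_homogeneousSubmodule (hchar : (2 : k) ≠ 0)
    {q : MvPolynomial (Fin 4) k} (hq : q ∈ homogeneousSubmodule (Fin 4) k 2) :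
    q ∈ symmetricForms k := by
  rw [homogeneousSubmodule_eq_finsupp_supported, AddMonoidAlgebra.supported_eq_span_single] at hq
  refine Submodule.span_le.mpr ?_ hq
  rintro _ ⟨d, hd, rfl⟩
  obtain ⟨i, j, rfl⟩ := Finsupp.exists_eq_single_add_single_of_degree_eq_two hd
  convert X_mul_X_mem_symmetricForms hchar i j using 1
  rw [X, X, monomial_mul, one_mul]
  rfl

theorem exists_rank_le_and_span_eq_of_hasRankLE (hchar : (2 : k) ≠ 0)
    {N₀ N₁ : Matrix (Fin 4) (Fin 4) k} (hN₀ : N₀.IsSymm) (hN₁ : N₁.IsSymm) (hN₀r : 2 < N₀.rank)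
    {p : MvPolynomial (Fin 4) k} (hp : p ∈ Submodule.span k {quadOfMat k N₁, quadOfMat k N₀})
    (hp0 : p ≠ 0) (hpr : HasRankLE k p 2) :
    ∃ t : k, (t • N₀ + N₁).rank ≤ 2 ∧
      Submodule.span k {p} = Submodule.span k {quadOfMat k (t • N₀ + N₁)} := by
  obtain ⟨a, b, rfl⟩ := Submodule.mem_span_pair.mp hp
  rw [← quadOfMat_smul, ← quadOfMat_smul, ← quadOfMat_add,
    hasRankLE_quadOfMat_iff hchar ((hN₁.smul a).add (hN₀.smul b))] at hpr
  have ha : a ≠ 0 := by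
    rintro rfl
    have hb : b ≠ 0 := by rintro rfl; simp at hp0
    rw [zero_smul, zero_add, rank_smul_of_ne_zero hb] at hpr
    omega
  have hcomb : (a⁻¹ * b) • N₀ + N₁ = a⁻¹ • (a • N₁ + b • N₀) := by
    rw [smul_add, smul_smul, smul_smul, inv_mul_cancel₀ ha, one_smul, add_comm]
  refine ⟨a⁻¹ * b, by rwa [hcomb, rank_smul_of_ne_zero (inv_ne_zero ha)], ?_⟩
  rw [hcomb, quadOfMat_smul, quadOfMat_add, quadOfMat_smul, quadOfMat_smul,
    Submodule.span_singleton_smul_eq (inv_ne_zero ha).isUnit]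

variable (k) in
def lowRankLines (V : Submodule k (MvPolynomial (Fin 4) k)) :
    Set (Submodule k (MvPolynomial (Fin 4) k)) :=
  {W | ∃ p ∈ V, p ≠ 0 ∧ W = Submodule.span k {p} ∧ HasRankLE k p 2}

theorem lowRankLines_finite_and_ncard_le_three (hchar : (2 : k) ≠ 0)
    {x y : MvPolynomial (Fin 4) k} (hV : Submodule.span k {x, y} ≤ symmetricForms k)
    {p₀ : MvPolynomial (Fin 4) k} (hp₀V : p₀ ∈ Submodule.span k {x, y})
    (hp₀ : ¬HasRankLE k p₀ 2) :
    (lowRankLines k (Submodule.span k {x, y})).Finite ∧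
      (lowRankLines k (Submodule.span k {x, y})).ncard ≤ 3 := by
  rcases (lowRankLines k (Submodule.span k {x, y})).eq_empty_or_nonempty with
    hS | ⟨_, p₁, hp₁V, hp₁, -, hp₁r⟩
  · simp [hS]
  obtain ⟨N₀, hN₀, rfl⟩ := hV hp₀V
  obtain ⟨N₁, hN₁, rfl⟩ := hV hp₁V
  rw [hasRankLE_quadOfMat_iff hchar hN₀, not_le] at hp₀
  rw [hasRankLE_quadOfMat_iff hchar hN₁] at hp₁r
  have hpencil := Submodule.span_pair_eq_of_linearIndependent hp₁V hp₀V <|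
    (LinearIndependent.pair_iff' hp₁).mpr fun a ha => by
      rw [← quadOfMat_smul] at ha
      have := (rank_smul_le a N₁).trans hp₁r
      rw [eq_of_quadOfMat_eq_of_isSymm hchar (hN₁.smul a) hN₀ ha] at this
      omega
  obtain ⟨s, hs, hts⟩ := exists_finset_card_le_of_rank_smul_add_lt (d := 3) hp₀ N₁
  refine (Set.finite_and_ncard_le_of_subset_image (s := s)
    (f := fun t => Submodule.span k {quadOfMat k (t • N₀ + N₁)}) ?_).imp_right (·.trans hs)
  rintro _ ⟨p, hpV, hp, rfl, hpr⟩
  obtain ⟨t, ht, hspan⟩ :=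
    exists_rank_le_and_span_eq_of_hasRankLE hchar hN₀ hN₁ hp₀ (hpencil ▸ hpV) hp hpr
  exact ⟨t, hts t (by omega), hspan.symm⟩

end QuadraticForms

theorem stmt4_general (k : Type*) [Field k] (hchar : (2 : k) ≠ 0)
    (Q Q' : MvPolynomial (Fin 4) k)
    (hQ : Q ∈ homogeneousSubmodule (Fin 4) k 2)
    (hQ' : Q' ∈ homogeneousSubmodule (Fin 4) k 2) :
    (∀ p ∈ Submodule.span k {Q, Q'}, p ≠ 0 → HasRankLE k p 2) ∨
    ({W : Submodule k (MvPolynomial (Fin 4) k) |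
        ∃ p ∈ Submodule.span k {Q, Q'}, p ≠ 0 ∧ W = Submodule.span k {p} ∧
          HasRankLE k p 2}.Finite ∧
      {W : Submodule k (MvPolynomial (Fin 4) k) |
        ∃ p ∈ Submodule.span k {Q, Q'}, p ≠ 0 ∧ W = Submodule.span k {p} ∧
          HasRankLE k p 2}.ncard ≤ 3) := by
  have hV : Submodule.span k {Q, Q'} ≤ symmetricForms k := Submodule.span_le.mpr <|
    Set.insert_subset (mem_symmetricForms_of_mem_homogeneousSubmodule hchar hQ)
      (Set.singleton_subset_iff.mpr (mem_symmetricForms_of_mem_homogeneousSubmodule hchar hQ'))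
  refine or_iff_not_imp_left.mpr fun hall => ?_
  push Not at hall
  obtain ⟨p₀, hp₀V, -, hp₀⟩ := hall
  exact lowRankLines_finite_and_ncard_le_three hchar hV hp₀V hp₀

theorem stmt4 (k : Type*) [Field k] [IsAlgClosed k] (hchar : (2 : k) ≠ 0)
    (Q Q' : MvPolynomial (Fin 4) k)
    (hQ : Q ∈ homogeneousSubmodule (Fin 4) k 2)
    (hQ' : Q' ∈ homogeneousSubmodule (Fin 4) k 2)
    (hind : LinearIndependent k ![Q, Q']) :
    (∀ p ∈ Submodule.span k {Q, Q'}, p ≠ 0 → HasRankLE k p 2) ∨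
    ({W : Submodule k (MvPolynomial (Fin 4) k) |
        ∃ p ∈ Submodule.span k {Q, Q'}, p ≠ 0 ∧ W = Submodule.span k {p} ∧
          HasRankLE k p 2}.Finite ∧
      {W : Submodule k (MvPolynomial (Fin 4) k) |
        ∃ p ∈ Submodule.span k {Q, Q'}, p ≠ 0 ∧ W = Submodule.span k {p} ∧
          HasRankLE k p 2}.ncard ≤ 3) :=
  stmt4_general k hchar Q Q' hQ hQ'

end
end

section
/- Assume char(k) ∉ {2, 3, 5}. Let a, b, c, d be a basis of R₁, let e = a + b + c + d, and let 𝔔 = k(a² − e²) ⊕ k(a² − b²) ⊕ k(a² − c²) ⊕ k(a² − d²) ⊆ R₂. Then 𝔔 is base-point free, and exactly ten one-dimensional subspaces of 𝔔 are spanned by a quadratic form of rank exactly two. ([SV], Example 5.1, main claim.) -/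
noncomputable section

open MvPolynomial

/-- A subspace of quadratic forms is base-point free if the only common zero
in k⁴ of all its elements is 0. -/
def BPFree (k : Type*) [Field k] (𝒬 : Submodule k (MvPolynomial (Fin 4) k)) : Prop :=
  ∀ v : Fin 4 → k, (∀ q ∈ 𝒬, eval v q = 0) → v = 0

/-!
In the coordinates `y = (a, b, c, d)` the forms `a, b, c, d, e` become `wₗ ⬝ y` for the
rows `wₗ` of `W = fivePoints`, and `𝔔` consists of the forms `∑ μₗ (wₗ ⬝ y)²` with
`∑ μₗ = 0`, whose symmetric matrix is `Wᵀ diag(μ) W`. Any four of the five rows form a basis.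
So if some `μₗ = 0` the rank of `Wᵀ diag(μ) W` is the number of nonzero `μₗ`, and otherwise
it is at least `3` (a rank-four form plus a rank-one term). The rank-two forms in `𝔔` are
therefore the nonzero multiples of `(wᵢ ⬝ y)² - (wⱼ ⬝ y)²`, one line for each of the ten
pairs `i < j`. At a base point all `(wₗ ⬝ y)²` agree: `yᵢ = ±y₀` and
`(y₀ + y₁ + y₂ + y₃)² = y₀²`, i.e. `(s² - 1) y₀² = 0` with `s ∈ {0, ±2, 4}`, which forces
`y = 0` when `3 ≠ 0` and `5 ≠ 0`.
-/

open Matrix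

namespace Matrix

variable {n K : Type*} [Fintype n] [Field K]

theorem rank_add_le {m : Type*} (A B : Matrix m n K) : (A + B).rank ≤ A.rank + B.rank := by
  rw [rank, rank, rank, mulVecLin_add]
  exact (Submodule.finrank_mono (LinearMap.range_add_le _ _)).trans
    (Submodule.finrank_add_le_finrank_add_finrank _ _)

theorem IsSymm.eq_zero_of_dotProduct_mulVec_self [DecidableEq n] {S : Matrix n n K}
    (hS : S.IsSymm) (h2 : (2 : K) ≠ 0) (h : ∀ v, v ⬝ᵥ S *ᵥ v = 0) : S = 0 := by
  have hdiag : ∀ i, S i i = 0 := fun i => by simpa using h (Pi.single i 1)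
  ext i j
  have hij := h (Pi.single i 1 + Pi.single j 1)
  simp only [mulVec_add, dotProduct_add, add_dotProduct, mulVec_single_one,
    single_one_dotProduct, col_apply, hdiag] at hij
  have hsym : S j i = S i j := by simpa using congr_fun₂ hS.eq i j
  rw [hsym] at hij
  simpa [h2] using (show (2 : K) * S i j = 0 by linear_combination hij)

omit [Fintype n] in
theorem IsSymm.transpose_mul_mul {m : Type*} [Fintype m] {M : Matrix m m K} (hM : M.IsSymm)
    (L : Matrix m n K) : (Lᵀ * M * L).IsSymm := by
  simp [IsSymm, transpose_mul, hM.eq, Matrix.mul_assoc]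

omit [Fintype n] in
theorem transpose_mul_diagonal_mul_eq_add {N : ℕ} (L : Matrix (Fin (N + 1)) n K)
    (μ : Fin (N + 1) → K) (l : Fin (N + 1)) :
    Lᵀ * diagonal μ * L = (L.submatrix l.succAbove id)ᵀ * diagonal (μ ∘ l.succAbove) *
      L.submatrix l.succAbove id + vecMulVec (μ l • L l) (L l) := by
  ext i j
  simp [mul_apply, diagonal, Fin.sum_univ_succAbove _ l, vecMulVec_apply, mul_comm,
    mul_left_comm, add_comm]

variable [DecidableEq K] {N : ℕ} (L : Matrix (Fin (N + 1)) (Fin N) K) (μ : Fin (N + 1) → K)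
  {l : Fin (N + 1)} (hL : IsUnit (L.submatrix l.succAbove id).det)
include hL

theorem rank_transpose_mul_diagonal_mul_of_eq_zero (hl : μ l = 0) :
    (Lᵀ * diagonal μ * L).rank = Fintype.card {i // μ i ≠ 0} := by
  rw [transpose_mul_diagonal_mul_eq_add L μ l, hl, zero_smul, zero_vecMulVec, add_zero,
    rank_mul_eq_left_of_isUnit_det _ _ hL,
    rank_mul_eq_right_of_isUnit_det _ _ (by rwa [det_transpose]), rank_diagonal,
    Fintype.card_subtype, Fintype.card_subtype, Finset.card_filter, Finset.card_filter,
    Fin.sum_univ_succAbove _ l]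
  simp [hl]

theorem le_rank_transpose_mul_diagonal_mul_add_one (hμ : ∀ i, μ i ≠ 0) :
    N ≤ (Lᵀ * diagonal μ * L).rank + 1 := by
  have hsplit := transpose_mul_diagonal_mul_eq_add L μ l
  calc N = ((L.submatrix l.succAbove id)ᵀ * diagonal (μ ∘ l.succAbove) *
        L.submatrix l.succAbove id).rank := by
        rw [rank_mul_eq_left_of_isUnit_det _ _ hL,
          rank_mul_eq_right_of_isUnit_det _ _ (by rwa [det_transpose]), rank_diagonal]
        simp [hμ]
    _ = (Lᵀ * diagonal μ * L + vecMulVec (-(μ l • L l)) (L l)).rank := by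
        rw [hsplit, neg_vecMulVec, add_neg_cancel_right]
    _ ≤ (Lᵀ * diagonal μ * L).rank + 1 :=
        (rank_add_le _ _).trans (Nat.add_le_add_left (rank_vecMulVec_le _ _) _)

end Matrix

section Combinatorics

variable {K : Type*} [Field K]

theorem card_support_eq_two_and_sum_eq_zero_iff {ι : Type*} [Fintype ι] [LinearOrder ι]
    [DecidableEq K] (μ : ι → K) :
    Fintype.card {l // μ l ≠ 0} = 2 ∧ ∑ l, μ l = 0 ↔
      ∃ (i j : ι) (t : K), i < j ∧ t ≠ 0 ∧ μ = t • (Pi.single i 1 - Pi.single j 1) := by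
  rw [Fintype.card_subtype, Finset.card_eq_two]
  constructor
  · rintro ⟨⟨i, j, hij, hsupp⟩, hsum⟩
    have hne : ∀ l, μ l ≠ 0 ↔ l = i ∨ l = j := fun l => by
      simpa using congr_arg (l ∈ ·) hsupp
    have hμ : μ = μ i • Pi.single i 1 + μ j • Pi.single j 1 := by
      funext l
      by_cases hl : l = i ∨ l = j
      · rcases hl with rfl | rfl <;> simp [hij, hij.symm]
      · simpa [Pi.single_apply, not_or.1 hl] using not_not.1 (mt (hne l).1 hl)
    have hji : μ j = -μ i := by
      rw [hμ] at hsum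
      simp only [Pi.add_apply, Pi.smul_apply, smul_eq_mul, Finset.sum_add_distrib,
        ← Finset.mul_sum, Finset.sum_pi_single', Finset.mem_univ, if_true, mul_one] at hsum
      linear_combination hsum
    have hi : μ i ≠ 0 := (hne i).2 (Or.inl rfl)
    rcases hij.lt_or_gt with hlt | hlt
    · exact ⟨i, j, μ i, hlt, hi, hμ.trans (by rw [hji]; module)⟩
    · exact ⟨j, i, μ j, hlt, hji ▸ neg_ne_zero.2 hi, hμ.trans (by rw [hji]; module)⟩
  · rintro ⟨i, j, t, hij, ht, rfl⟩
    refine ⟨⟨i, j, hij.ne, ?_⟩, by simp [mul_sub, Finset.sum_sub_distrib, ← Finset.mul_sum]⟩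
    ext l
    by_cases hi : l = i <;> by_cases hj : l = j <;> simp_all [Pi.single_apply, hij.ne, hij.ne']

theorem injOn_span_single_sub_single {ι : Type*} [LinearOrder ι] :
    Set.InjOn
      (fun p : ι × ι => Submodule.span K {(Pi.single p.1 1 - Pi.single p.2 1 : ι → K)})
      {p | p.1 < p.2} := by
  rintro ⟨i, j⟩ (hij : i < j) ⟨i', j'⟩ (hij' : i' < j') h
  dsimp only at h
  have hmem : (Pi.single i' 1 - Pi.single j' 1 : ι → K) ∈
      Submodule.span K {(Pi.single i 1 - Pi.single j 1 : ι → K)} :=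
    h ▸ Submodule.mem_span_singleton_self _
  obtain ⟨s, hs⟩ := Submodule.mem_span_singleton.1 hmem
  have hsupp : ∀ l, (Pi.single i' 1 - Pi.single j' 1 : ι → K) l ≠ 0 → l = i ∨ l = j := by
    intro l hl
    by_contra! hne
    rw [← hs] at hl
    simp [hne.1, hne.2] at hl
  have hi' := hsupp i' (by simp [hij'.ne])
  have hj' := hsupp j' (by simp [hij'.ne'])
  simp only [Prod.mk.injEq]
  rcases hi' with rfl | rfl <;> rcases hj' with rfl | rfl
  all_goals first
    | exact ⟨rfl, rfl⟩
    | exact absurd hij' (lt_irrefl _)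
    | exact absurd hij (lt_asymm hij')

end Combinatorics

theorem mem_span_sub_iff {K M : Type*} [Field K] [AddCommGroup M] [Module K M]
    (x : Fin 5 → M) (q : M) :
    q ∈ Submodule.span K {x 0 - x 4, x 0 - x 1, x 0 - x 2, x 0 - x 3} ↔
      ∃ μ : Fin 5 → K, ∑ l, μ l = 0 ∧ ∑ l, μ l • x l = q := by
  simp only [Submodule.mem_span_insert, Submodule.mem_span_singleton, Fin.sum_univ_five]
  constructor
  · rintro ⟨c₄, _, ⟨c₁, _, ⟨c₂, _, ⟨c₃, rfl⟩, rfl⟩, rfl⟩, rfl⟩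
    refine ⟨![c₄ + c₁ + c₂ + c₃, -c₁, -c₂, -c₃, -c₄], ?_, ?_⟩ <;>
      simp only [Matrix.cons_val]
    · ring
    · module
  · rintro ⟨μ, hμ, rfl⟩
    refine ⟨-μ 4, _, ⟨-μ 1, _, ⟨-μ 2, _, ⟨-μ 3, rfl⟩, rfl⟩, rfl⟩, ?_⟩
    rw [show μ 0 = -μ 1 - μ 2 - μ 3 - μ 4 by linear_combination hμ]
    module

theorem eq_zero_of_sq_eq_sq {k : Type*} [Field k] (h3 : (3 : k) ≠ 0) (h5 : (5 : k) ≠ 0)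
    {x y z w : k} (hy : y ^ 2 = x ^ 2) (hz : z ^ 2 = x ^ 2) (hw : w ^ 2 = x ^ 2)
    (hs : (x + y + z + w) ^ 2 = x ^ 2) : x = 0 := by
  have h15 : (15 : k) ≠ 0 := by
    rw [show (15 : k) = 3 * 5 by norm_num]; exact mul_ne_zero h3 h5
  refine pow_eq_zero_iff two_ne_zero |>.mp ?_
  rcases sq_eq_sq_iff_eq_or_eq_neg.1 hy with rfl | rfl <;>
  rcases sq_eq_sq_iff_eq_or_eq_neg.1 hz with rfl | rfl <;>
  rcases sq_eq_sq_iff_eq_or_eq_neg.1 hw with rfl | rfl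
  all_goals first
    | linear_combination -hs
    | exact (mul_right_inj' h3).mp (by linear_combination hs)
    | exact (mul_right_inj' h15).mp (by linear_combination hs)

theorem exists_isUnit_eval_eq_mulVec {σ K : Type*} [Fintype σ] [DecidableEq σ] [Field K]
    (f : σ → MvPolynomial σ K) (hX : ∀ m, X m ∈ Submodule.span K (Set.range f)) :
    ∃ A : Matrix σ σ K, IsUnit A ∧ ∀ v, (fun i => eval v (f i)) = A *ᵥ v := by
  choose B hB using fun m => (Submodule.mem_span_range_iff_exists_fun K).1 (hX m)
  have hBv : ∀ v, (of B) *ᵥ (fun i => eval v (f i)) = v := fun v => funext fun m => by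
    simpa [mulVec, dotProduct, smul_eq_C_mul] using congr_arg (eval v) (hB m)
  have hunit : IsUnit (of B) := mulVec_surjective_iff_isUnit.1 fun v => ⟨_, hBv v⟩
  refine ⟨(of B)⁻¹, isUnit_nonsing_inv_iff.2 hunit, fun v => ?_⟩
  conv_rhs => rw [← hBv v]
  rw [mulVec_mulVec, nonsing_inv_mul _ ((isUnit_iff_isUnit_det _).1 hunit), one_mulVec]

section FivePoints

variable {k : Type*} [Field k]

def fivePoints (k : Type*) [Field k] : Matrix (Fin 5) (Fin 4) k :=
  !![1, 0, 0, 0; 0, 1, 0, 0; 0, 0, 1, 0; 0, 0, 0, 1; 1, 1, 1, 1]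

theorem isUnit_det_fivePoints_submatrix (l : Fin 5) :
    IsUnit ((fivePoints k).submatrix l.succAbove id).det := by
  fin_cases l <;> simp [fivePoints, det_succ_row_zero, Fin.sum_univ_succ, Fin.succAbove]

theorem injective_fivePoints_form :
    Function.Injective fun μ : Fin 5 → k => (fivePoints k)ᵀ * diagonal μ * fivePoints k := by
  intro μ ν h
  have entry (i j : Fin 4) := congr_fun₂ h i j
  simp only [fivePoints, mul_apply, Fin.sum_univ_five, transpose_apply, diagonal_apply] at entry
  have h4 : μ 4 = ν 4 := by simpa using entry 0 1
  funext l
  fin_cases l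
  · simpa [h4] using entry 0 0
  · simpa [h4] using entry 1 1
  · simpa [h4] using entry 2 2
  · simpa [h4] using entry 3 3
  · exact h4

theorem rank_fivePoints_form_eq_two_iff [DecidableEq k] (μ : Fin 5 → k) :
    ((fivePoints k)ᵀ * diagonal μ * fivePoints k).rank = 2 ↔
      Fintype.card {l // μ l ≠ 0} = 2 := by
  by_cases h : ∃ l, μ l = 0
  · obtain ⟨l, hl⟩ := h
    rw [rank_transpose_mul_diagonal_mul_of_eq_zero _ μ (isUnit_det_fivePoints_submatrix l) hl]
  · push Not at h
    have h3 := le_rank_transpose_mul_diagonal_mul_add_one (fivePoints k) μ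
      (isUnit_det_fivePoints_submatrix 0) h
    have h5 : Fintype.card {l // μ l ≠ 0} = 5 := by simp [h]
    omega

end FivePoints

section QuadOfMat

variable {k : Type*} [Field k]

theorem quadOfMat_injOn_isSymm (h2 : (2 : k) ≠ 0) {N N' : Matrix (Fin 4) (Fin 4) k}
    (hN : N.IsSymm) (hN' : N'.IsSymm) (h : quadOfMat k N = quadOfMat k N') : N = N' := by
  refine sub_eq_zero.1 (IsSymm.eq_zero_of_dotProduct_mulVec_self (hN.sub hN') h2 fun v => ?_)
  rw [sub_mulVec, dotProduct_sub, ← eval_quadOfMat, ← eval_quadOfMat, h, sub_self]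

theorem hasRank_quadOfMat_iff (h2 : (2 : k) ≠ 0) {N : Matrix (Fin 4) (Fin 4) k}
    (hN : N.IsSymm) (r : ℕ) : HasRank k (quadOfMat k N) r ↔ N.rank = r := by
  refine ⟨fun ⟨N', hN', hq, hr⟩ => ?_, fun hr => ⟨N, hN, rfl, hr⟩⟩
  rwa [quadOfMat_injOn_isSymm h2 hN hN' hq]

theorem sum_smul_sq_eq_quadOfMat [Infinite k] {ι : Type*} [Fintype ι] [DecidableEq ι]
    (ℓ : ι → MvPolynomial (Fin 4) k) (L : Matrix ι (Fin 4) k)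
    (hℓ : ∀ v, (fun l => eval v (ℓ l)) = L *ᵥ v) (μ : ι → k) :
    ∑ l, μ l • ℓ l ^ 2 = quadOfMat k (Lᵀ * diagonal μ * L) := by
  refine MvPolynomial.funext fun v => ?_
  rw [eval_quadOfMat, Matrix.mul_assoc, ← mulVec_mulVec, ← mulVec_mulVec, dotProduct_mulVec,
    vecMul_transpose, ← hℓ]
  simp [dotProduct, mulVec_diagonal, smul_eq_C_mul, sq, mul_comm, mul_left_comm]

theorem hasRank_sum_smul_sq_iff [Infinite k] (h2 : (2 : k) ≠ 0) {ι : Type*} [Fintype ι]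
    [DecidableEq ι] {ℓ : ι → MvPolynomial (Fin 4) k} (W : Matrix ι (Fin 4) k)
    {A : Matrix (Fin 4) (Fin 4) k} (hA : IsUnit A)
    (hℓ : ∀ v, (fun l => eval v (ℓ l)) = (W * A) *ᵥ v) (μ : ι → k) (r : ℕ) :
    HasRank k (∑ l, μ l • ℓ l ^ 2) r ↔ (Wᵀ * diagonal μ * W).rank = r := by
  have hdetA : IsUnit A.det := (isUnit_iff_isUnit_det A).1 hA
  rw [sum_smul_sq_eq_quadOfMat ℓ _ hℓ,
    hasRank_quadOfMat_iff h2 ((isSymm_diagonal μ).transpose_mul_mul _), transpose_mul,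
    show Aᵀ * Wᵀ * diagonal μ * (W * A) = Aᵀ * (Wᵀ * diagonal μ * W) * A by
      simp only [Matrix.mul_assoc],
    rank_mul_eq_left_of_isUnit_det _ _ hdetA,
    rank_mul_eq_right_of_isUnit_det _ _ (by rwa [det_transpose])]

theorem injective_linearCombination_sq [Infinite k] (h2 : (2 : k) ≠ 0) {ι : Type*} [Fintype ι]
    [DecidableEq ι] {ℓ : ι → MvPolynomial (Fin 4) k} {W : Matrix ι (Fin 4) k}
    (hW : Function.Injective fun μ : ι → k => Wᵀ * diagonal μ * W)
    {A : Matrix (Fin 4) (Fin 4) k} (hA : IsUnit A)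
    (hℓ : ∀ v, (fun l => eval v (ℓ l)) = (W * A) *ᵥ v) :
    Function.Injective (Fintype.linearCombination k fun l => ℓ l ^ 2) := by
  intro μ ν h
  simp only [Fintype.linearCombination_apply, sum_smul_sq_eq_quadOfMat ℓ _ hℓ] at h
  have h' := quadOfMat_injOn_isSymm h2 ((isSymm_diagonal μ).transpose_mul_mul _)
    ((isSymm_diagonal ν).transpose_mul_mul _) h
  simp only [transpose_mul, Matrix.mul_assoc] at h'
  refine hW (((isUnit_transpose A).2 hA).mul_left_cancel (hA.mul_right_cancel ?_))
  simpa only [Matrix.mul_assoc] using h'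

end QuadOfMat

section Example

variable {k : Type*} [Field k]

theorem bpFree_span_sq_sub_sq (h3 : (3 : k) ≠ 0) (h5 : (5 : k) ≠ 0)
    {a b c d : MvPolynomial (Fin 4) k} {A : Matrix (Fin 4) (Fin 4) k} (hA : IsUnit A)
    (hAv : ∀ v, (fun i => eval v (![a, b, c, d] i)) = A *ᵥ v) :
    BPFree k (Submodule.span k
      {a ^ 2 - (a + b + c + d) ^ 2, a ^ 2 - b ^ 2, a ^ 2 - c ^ 2, a ^ 2 - d ^ 2}) := by
  intro v hv
  have hgen : ∀ q ∈ ({a ^ 2 - (a + b + c + d) ^ 2, a ^ 2 - b ^ 2, a ^ 2 - c ^ 2,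
      a ^ 2 - d ^ 2} : Set (MvPolynomial (Fin 4) k)), eval v q = 0 :=
    fun q hq => hv q (Submodule.subset_span hq)
  simp only [Set.mem_insert_iff, Set.mem_singleton_iff, forall_eq_or_imp, forall_eq, map_sub,
    map_pow, map_add, sub_eq_zero] at hgen
  obtain ⟨he, hb, hc, hd⟩ := hgen
  have ha : eval v a = 0 := eq_zero_of_sq_eq_sq h3 h5 hb.symm hc.symm hd.symm he.symm
  have hsq : ∀ x : k, eval v a ^ 2 = x ^ 2 → x = 0 := fun x hx =>
    pow_eq_zero_iff two_ne_zero |>.1 (by rw [← hx, ha, zero_pow two_ne_zero])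
  refine mulVec_injective_iff_isUnit.2 hA
    ((hAv v).symm.trans ?_ |>.trans (mulVec_zero A).symm)
  funext i
  fin_cases i <;> simp [ha, hsq _ hb, hsq _ hc, hsq _ hd]

theorem ncard_rank_two_lines {V : Type*} [AddCommGroup V] [Module k V]
    (Q : (Fin 5 → k) →ₗ[k] V) (hQ : Function.Injective Q) (𝔔 : Submodule k V)
    (hmem : ∀ q, q ∈ 𝔔 ↔ ∃ μ, ∑ l, μ l = 0 ∧ Q μ = q) (P : V → Prop)
    (hP : ∀ μ, ∑ l, μ l = 0 →
      (P (Q μ) ↔ ((fivePoints k)ᵀ * diagonal μ * fivePoints k).rank = 2)) :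
    {W : Submodule k V | ∃ q ∈ 𝔔, q ≠ 0 ∧ W = Submodule.span k {q} ∧ P q}.ncard = 10 := by
  classical
  have hP' : ∀ μ, ∑ l, μ l = 0 → (P (Q μ) ↔ ∃ (i j : Fin 5) (t : k),
      i < j ∧ t ≠ 0 ∧ μ = t • (Pi.single i 1 - Pi.single j 1)) := fun μ hμ => by
    rw [hP μ hμ, rank_fivePoints_form_eq_two_iff, ← card_support_eq_two_and_sum_eq_zero_iff,
      and_iff_left hμ]
  have hlines : {W : Submodule k V | ∃ q ∈ 𝔔, q ≠ 0 ∧ W = Submodule.span k {q} ∧ P q} =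
      (fun p : Fin 5 × Fin 5 =>
        (Submodule.span k {(Pi.single p.1 1 - Pi.single p.2 1 : Fin 5 → k)}).map Q) ''
        {p | p.1 < p.2} := by
    ext W
    simp only [Set.mem_ofPred_eq, Set.mem_image, Submodule.map_span, Set.image_singleton]
    constructor
    · rintro ⟨q, hq, -, rfl, hPq⟩
      obtain ⟨μ, hμ, rfl⟩ := (hmem q).1 hq
      obtain ⟨i, j, t, hij, ht, rfl⟩ := (hP' μ hμ).1 hPq
      exact ⟨(i, j), hij, by rw [map_smul, Submodule.span_singleton_smul_eq ht.isUnit]⟩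
    · rintro ⟨⟨i, j⟩, hij, rfl⟩
      have hsum : ∑ l, (Pi.single i 1 - Pi.single j 1 : Fin 5 → k) l = 0 := by simp
      refine ⟨_, (hmem _).2 ⟨_, hsum, rfl⟩, ?_, rfl,
        (hP' _ hsum).2 ⟨i, j, 1, hij, one_ne_zero, by simp⟩⟩
      rw [Ne, map_eq_zero_iff Q hQ, sub_eq_zero]
      exact fun h => by simpa [hij.ne] using congr_fun h i
  have hinj : Set.InjOn (fun p : Fin 5 × Fin 5 =>
      (Submodule.span k {(Pi.single p.1 1 - Pi.single p.2 1 : Fin 5 → k)}).map Q)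
      {p | p.1 < p.2} :=
    (Submodule.map_injective_of_injective hQ).comp_injOn injOn_span_single_sub_single
  rw [hlines, hinj.ncard_image, Set.ncard_eq_toFinset_card']
  rfl

end Example

theorem stmt10_general (k : Type*) [Field k] [IsAlgClosed k]
    (hchar2 : (2 : k) ≠ 0) (hchar3 : (3 : k) ≠ 0) (hchar5 : (5 : k) ≠ 0)
    (a b c d : MvPolynomial (Fin 4) k)
    (hspan : Submodule.span k {a, b, c, d} =
      homogeneousSubmodule (Fin 4) k 1)
    (e : MvPolynomial (Fin 4) k) (he : e = a + b + c + d)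
    (𝔔 : Submodule k (MvPolynomial (Fin 4) k))
    (h𝔔 : 𝔔 = Submodule.span k
      {a ^ 2 - e ^ 2, a ^ 2 - b ^ 2, a ^ 2 - c ^ 2, a ^ 2 - d ^ 2}) :
    BPFree k 𝔔 ∧
    {W : Submodule k (MvPolynomial (Fin 4) k) |
        ∃ q ∈ 𝔔, q ≠ 0 ∧ W = Submodule.span k {q} ∧ HasRank k q 2}.ncard = 10 := by
  classical
  have hX : ∀ m, X m ∈ Submodule.span k (Set.range ![a, b, c, d]) := fun m => by
    simp only [range_cons, range_empty, Set.singleton_union, LawfulSingleton.insert_empty_eq,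
      hspan, mem_homogeneousSubmodule, isHomogeneous_X]
  obtain ⟨A, hA, hAv⟩ := exists_isUnit_eval_eq_mulVec _ hX
  have hℓ : ∀ v, (fun l => eval v (![a, b, c, d, e] l)) = (fivePoints k * A) *ᵥ v := fun v => by
    rw [← mulVec_mulVec, ← hAv]
    funext l
    fin_cases l <;> simp [fivePoints, he, mulVec, dotProduct, Fin.sum_univ_four]
  have hQ := injective_linearCombination_sq hchar2 injective_fivePoints_form hA hℓ
  refine ⟨h𝔔 ▸ he ▸ bpFree_span_sq_sub_sq hchar3 hchar5 hA hAv,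
    ncard_rank_two_lines _ hQ 𝔔 (fun q => ?_) (HasRank k · 2) fun μ _ => ?_⟩
  · simp only [h𝔔, Fintype.linearCombination_apply]
    exact mem_span_sub_iff ![a ^ 2, b ^ 2, c ^ 2, d ^ 2, e ^ 2] q
  · rw [Fintype.linearCombination_apply]
    exact hasRank_sum_smul_sq_iff hchar2 _ hA hℓ μ 2

theorem stmt10 (k : Type*) [Field k] [IsAlgClosed k]
    (hchar2 : (2 : k) ≠ 0) (hchar3 : (3 : k) ≠ 0) (hchar5 : (5 : k) ≠ 0)
    (a b c d : MvPolynomial (Fin 4) k)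
    (hmem : ∀ t ∈ ({a, b, c, d} : Set (MvPolynomial (Fin 4) k)),
      t ∈ homogeneousSubmodule (Fin 4) k 1)
    (hind : LinearIndependent k ![a, b, c, d])
    (hspan : Submodule.span k {a, b, c, d} =
      homogeneousSubmodule (Fin 4) k 1)
    (e : MvPolynomial (Fin 4) k) (he : e = a + b + c + d)
    (𝔔 : Submodule k (MvPolynomial (Fin 4) k))
    (h𝔔 : 𝔔 = Submodule.span k
      {a ^ 2 - e ^ 2, a ^ 2 - b ^ 2, a ^ 2 - c ^ 2, a ^ 2 - d ^ 2}) :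
    BPFree k 𝔔 ∧
    {W : Submodule k (MvPolynomial (Fin 4) k) |
        ∃ q ∈ 𝔔, q ≠ 0 ∧ W = Submodule.span k {q} ∧ HasRank k q 2}.ncard = 10 :=
  stmt10_general k hchar2 hchar3 hchar5 a b c d hspan e he 𝔔 h𝔔
end
end

section
/- Suppose μ₂₃ = 1, μ₃₄² = 1, and μ₃₄ = μ₂₄ = μ₁₄² = μ₁₃². Then q₁ = z₁z₂, q₂ = z₃², q₃ = z₁² − z₂z₄, q₄ = z₂² + z₄² − z₂z₃ form a normalizing sequence in S: q₁ is a normal element of S; for each j = 1, 2, 3 the image of q_{j+1} in the quotient ring S/⟨q₁, …, q_j⟩ (quotient by the two-sided ideal generated by q₁, …, q_j) is a normal element; and the two-sided ideal ⟨q₁, q₂, q₃, q₄⟩ is proper. ([CaV], §5.3, as quoted in the survey's example on the quadric system q₁, …, q₄.) -/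
/-!
STATEMENT 12: [CaV, §5.3]. Suppose μ₂₃ = 1, μ₃₄² = 1, and
μ₃₄ = μ₂₄ = μ₁₄² = μ₁₃². Then q₁ = z₁z₂, q₂ = z₃², q₃ = z₁² − z₂z₄,
q₄ = z₂² + z₄² − z₂z₃ form a normalizing sequence in S: q₁ is a normal element
of S; for each j = 1, 2, 3 the image of q_{j+1} in S/⟨q₁, …, q_j⟩ is a normal
element; and the two-sided ideal ⟨q₁, q₂, q₃, q₄⟩ is proper.
-/

noncomputable section

/-- An element `s` of a ring `T` is normal if `sT = Ts`. -/
def IsNormalElem {T : Type*} [Ring T] (s : T) : Prop :=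
  Set.range (fun t => s * t) = Set.range (fun t => t * s)

/-!
Each quadric `q` of the sequence skew-commutes with the generators modulo the previous ones:
`q zᵢ ≡ cᵢ zᵢ q` for units `cᵢ`. The rescaling `zᵢ ↦ cᵢ zᵢ` extends to an automorphism `σ` of `S`,
and induction on words gives `q t ≡ σ(t) q` for every `t`, so `q` is normal in the quotient.
Quadratic monomials `z_a z_b` skew-commute with every generator exactly; for `q₃` and `q₄` the
discrepancies are multiples of `q₁ = z₁z₂`. The ideal is proper because all four quadrics lie in
the kernel of the augmentation `zᵢ ↦ 0`.
-/

theorem isNormalElem_map_of_mul_eq {R T : Type*} [Ring R] [Ring T] (π : R →+* T)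
    (hπ : Function.Surjective π) (σ : R → R) (hσ : Function.Surjective σ) {q : R}
    (h : ∀ t, π (q * t) = π (σ t * q)) : IsNormalElem (π q) := by
  ext u
  constructor
  · rintro ⟨t, rfl⟩
    obtain ⟨s, rfl⟩ := hπ t
    exact ⟨π (σ s), by simp only [← map_mul, h]⟩
  · rintro ⟨t, rfl⟩
    obtain ⟨s, rfl⟩ := hπ t
    obtain ⟨r, rfl⟩ := hσ s
    exact ⟨π r, by simp only [← map_mul, h]⟩

namespace SkewAlg

variable {k : Type*} [CommRing k] {n : ℕ} {μ : Fin n → Fin n → k}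

theorem zgen_mul_zgen (i j : Fin n) :
    zgen k n μ j * zgen k n μ i = μ i j • (zgen k n μ i * zgen k n μ j) := by
  simpa [zgen] using RingQuot.mkAlgHom_rel k (SkewRel.rel (μ := μ) i j)

theorem zgen_mul_zgen_mul_zgen (a b i : Fin n) :
    zgen k n μ a * zgen k n μ b * zgen k n μ i =
      (μ i a * μ i b) • (zgen k n μ i * (zgen k n μ a * zgen k n μ b)) := by
  rw [mul_assoc, zgen_mul_zgen i b, mul_smul_comm, ← mul_assoc, zgen_mul_zgen i a, smul_mul_assoc,
    smul_smul, mul_comm (μ i b), mul_assoc]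

def scale (c : Fin n → k) : SkewAlg k n μ →ₐ[k] SkewAlg k n μ :=
  RingQuot.liftAlgHom k ⟨FreeAlgebra.lift k fun i => c i • zgen k n μ i, by
    rintro _ _ ⟨i, j⟩
    simp only [map_mul, map_smul, FreeAlgebra.lift_ι_apply]
    rw [smul_mul_smul_comm, zgen_mul_zgen, smul_mul_smul_comm, smul_smul, smul_smul, mul_comm (c j),
      mul_comm]⟩

@[simp]
theorem scale_zgen (c : Fin n → k) (i : Fin n) : scale c (zgen k n μ i) = c i • zgen k n μ i := by
  simp [scale, zgen, RingQuot.liftAlgHom_mkAlgHom_apply]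

theorem scale_scale {c c' : Fin n → k} (h : ∀ i, c i * c' i = 1) (s : SkewAlg k n μ) :
    scale c (scale c' s) = s := by
  suffices (scale (μ := μ) c).comp (scale c') = AlgHom.id k _ from AlgHom.congr_fun this s
  refine RingQuot.ringQuot_ext' _ _ _ (FreeAlgebra.hom_ext (funext fun i => ?_))
  change scale c (scale c' (zgen k n μ i)) = zgen k n μ i
  rw [scale_zgen, map_smul, scale_zgen, smul_smul, mul_comm, h, one_smul]

theorem scale_surjective {c : Fin n → k} (hc : ∀ i, IsUnit (c i)) :
    Function.Surjective (scale (μ := μ) c) := fun s =>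
  ⟨scale (fun i => ↑(hc i).unit⁻¹) s, scale_scale (fun i => (hc i).mul_val_inv) s⟩

theorem map_mul_eq_map_scale_mul {T : Type*} [Ring T] (π : SkewAlg k n μ →+* T) {c : Fin n → k}
    {q : SkewAlg k n μ} (h : ∀ i, π (q * zgen k n μ i) = π (c i • (zgen k n μ i * q)))
    (t : SkewAlg k n μ) : π (q * t) = π (scale c t * q) := by
  obtain ⟨x, rfl⟩ := RingQuot.mkAlgHom_surjective k (SkewRel k n μ) t
  induction x using FreeAlgebra.induction with
  | grade0 r => rw [AlgHom.commutes, AlgHom.commutes, Algebra.commutes]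
  | grade1 i =>
    change π (q * zgen k n μ i) = π (scale c (zgen k n μ i) * q)
    rw [scale_zgen, smul_mul_assoc]
    exact h i
  | mul a b ha hb =>
    simp only [map_mul] at ha hb ⊢
    rw [← mul_assoc, ha, mul_assoc, hb, mul_assoc]
  | add a b ha hb => simp only [map_add, mul_add, add_mul, ha, hb]

theorem isNormalElem_map_of_mul_zgen {T : Type*} [Ring T] (π : SkewAlg k n μ →+* T)
    (hπ : Function.Surjective π) {c : Fin n → k} (hc : ∀ i, IsUnit (c i)) {q : SkewAlg k n μ}
    (h : ∀ i, π (q * zgen k n μ i) = π (c i • (zgen k n μ i * q))) : IsNormalElem (π q) :=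
  isNormalElem_map_of_mul_eq π hπ _ (scale_surjective hc) (map_mul_eq_map_scale_mul π h)

theorem isNormalElem_map_zgen_mul_zgen {T : Type*} [Ring T] (π : SkewAlg k n μ →+* T)
    (hπ : Function.Surjective π) (hμ : ∀ i j, IsUnit (μ i j)) (a b : Fin n) :
    IsNormalElem (π (zgen k n μ a * zgen k n μ b)) :=
  isNormalElem_map_of_mul_zgen π hπ (fun i => (hμ i a).mul (hμ i b))
    fun i => congrArg π (zgen_mul_zgen_mul_zgen a b i)

theorem isNormalElem_mk'_of_mul_zgen_sub_mem (I : TwoSidedIdeal (SkewAlg k n μ)) {c : Fin n → k}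
    (hc : ∀ i, IsUnit (c i)) {q : SkewAlg k n μ}
    (h : ∀ i, q * zgen k n μ i - c i • (zgen k n μ i * q) ∈ I) : IsNormalElem (I.ringCon.mk' q) :=
  isNormalElem_map_of_mul_zgen _ I.ringCon.mk'_surjective hc
    fun i => I.ringCon.eq.2 ((I.rel_iff _ _).2 (h i))

def augmentation : SkewAlg k n μ →ₐ[k] k :=
  RingQuot.liftAlgHom k ⟨FreeAlgebra.lift k 0, by rintro _ _ ⟨i, j⟩; simp⟩

@[simp]
theorem augmentation_zgen (i : Fin n) : augmentation (zgen k n μ i) = 0 := by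
  simp [augmentation, zgen, RingQuot.liftAlgHom_mkAlgHom_apply]

theorem span_ne_top_of_augmentation_eq_zero [Nontrivial k] {s : Set (SkewAlg k n μ)}
    (hs : ∀ x ∈ s, augmentation x = 0) : TwoSidedIdeal.span s ≠ ⊤ := by
  intro htop
  have hle : TwoSidedIdeal.span s ≤ TwoSidedIdeal.ker (augmentation (μ := μ)) :=
    TwoSidedIdeal.span_le.2 fun x hx => (TwoSidedIdeal.mem_ker _).2 (hs x hx)
  have h1 := hle (htop ▸ TwoSidedIdeal.mem_top (x := (1 : SkewAlg k n μ)))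
  rw [TwoSidedIdeal.mem_ker, map_one] at h1
  exact one_ne_zero h1

end SkewAlg

section Quadrics

variable {k A : Type*} [CommRing k] [Ring A] [Algebra k A] {μ : Fin 4 → Fin 4 → k}
  {z : Fin 4 → A} {m : k}

theorem sq_sub_mul_skew_comm_mod (hz : ∀ i j, z j * z i = μ i j • (z i * z j))
    (hm : m ^ 2 = 1) (h12 : μ 1 2 = 1) (h13 : μ 1 3 = m) (h23 : μ 2 3 = m) (h02 : μ 0 2 ^ 2 = m)
    (h03 : μ 0 3 ^ 2 = m) (I : TwoSidedIdeal A) (hI : z 0 * z 1 ∈ I) (i : Fin 4) :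
    (z 0 ^ 2 - z 1 * z 3) * z i - ![1, m, m, m] i • (z i * (z 0 ^ 2 - z 1 * z 3)) ∈ I := by
  -- `i < j` only orients the rewriting: `simp` sorts every word into increasing order.
  have sort : ∀ i j, i < j → z j * z i = μ i j • (z i * z j) := fun i j _ => hz i j
  have sort' : ∀ i j x, i < j → z j * (z i * x) = μ i j • (z i * (z j * x)) := fun i j x _ => by
    rw [← mul_assoc, hz, smul_mul_assoc, mul_assoc]
  have key : (z 0 ^ 2 - z 1 * z 3) * z i - ![1, m, m, m] i • (z i * (z 0 ^ 2 - z 1 * z 3)) =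
      z 0 * z 1 * ![(1 - μ 0 1 * μ 0 3) • z 3, 0, 0, 0] i +
        ![0, (1 - m * μ 0 1 ^ 2) • z 0, 0, 0] i * (z 0 * z 1) := by
    fin_cases i <;>
    simp (disch := decide) only [Fin.zero_eta, Fin.mk_one, Fin.reduceFinMk, Matrix.cons_val,
      pow_two, sub_mul, mul_sub, mul_assoc, smul_mul_assoc, mul_smul_comm, smul_smul, smul_sub,
      one_smul, mul_zero, zero_mul, add_zero, zero_add, sort, sort', h12, h13, h23] <;>
    match_scalars <;> grind
  rw [key]
  exact I.add_mem (I.mul_mem_right _ _ hI) (I.mul_mem_left _ _ hI)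

theorem sq_add_sq_sub_mul_skew_comm_mod (hz : ∀ i j, z j * z i = μ i j • (z i * z j))
    (hm : m ^ 2 = 1) (h12 : μ 1 2 = 1) (h13 : μ 1 3 = m) (h23 : μ 2 3 = m) (h03 : μ 0 3 ^ 2 = m)
    (I : TwoSidedIdeal A) (hI : z 0 * z 1 ∈ I) (i : Fin 4) :
    (z 1 ^ 2 + z 3 ^ 2 - z 1 * z 2) * z i -
      ![m, 1, 1, 1] i • (z i * (z 1 ^ 2 + z 3 ^ 2 - z 1 * z 2)) ∈ I := by
  have sort : ∀ i j, i < j → z j * z i = μ i j • (z i * z j) := fun i j _ => hz i j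
  have sort' : ∀ i j x, i < j → z j * (z i * x) = μ i j • (z i * (z j * x)) := fun i j x _ => by
    rw [← mul_assoc, hz, smul_mul_assoc, mul_assoc]
  have key : (z 1 ^ 2 + z 3 ^ 2 - z 1 * z 2) * z i -
      ![m, 1, 1, 1] i • (z i * (z 1 ^ 2 + z 3 ^ 2 - z 1 * z 2)) =
        z 0 * z 1 * ![(μ 0 1 ^ 2 - m) • z 1 - (μ 0 1 * μ 0 2 - m) • z 2, 0, 0, 0] i := by
    fin_cases i <;>
    simp (disch := decide) only [Fin.zero_eta, Fin.mk_one, Fin.reduceFinMk, Matrix.cons_val,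
      pow_two, sub_mul, add_mul, mul_add, mul_sub, mul_assoc, mul_smul_comm, smul_smul, smul_sub,
      smul_add, one_smul, mul_zero, sort, sort', h12, h13, h23] <;>
    match_scalars <;> grind
  rw [key]
  exact I.mul_mem_right _ _ hI

end Quadrics

theorem stmt12_general (k : Type*) [Field k]
    (μ : Fin 4 → Fin 4 → k)
    (hμ0 : ∀ i j, μ i j ≠ 0)
    (h23 : μ 1 2 = 1) (h34sq : (μ 2 3) ^ 2 = 1)
    (h3424 : μ 2 3 = μ 1 3) (h2414 : μ 1 3 = (μ 0 3) ^ 2)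
    (h1413 : (μ 0 3) ^ 2 = (μ 0 2) ^ 2)
    (z : Fin 4 → SkewAlg k 4 μ) (hz : z = zgen k 4 μ)
    (q₁ q₂ q₃ q₄ : SkewAlg k 4 μ)
    (hq₁ : q₁ = z 0 * z 1) (hq₂ : q₂ = (z 2) ^ 2)
    (hq₃ : q₃ = (z 0) ^ 2 - z 1 * z 3)
    (hq₄ : q₄ = (z 1) ^ 2 + (z 3) ^ 2 - z 1 * z 2) :
    IsNormalElem q₁ ∧
    IsNormalElem ((TwoSidedIdeal.span {q₁}).ringCon.mk' q₂) ∧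
    IsNormalElem ((TwoSidedIdeal.span {q₁, q₂}).ringCon.mk' q₃) ∧
    IsNormalElem ((TwoSidedIdeal.span {q₁, q₂, q₃}).ringCon.mk' q₄) ∧
    TwoSidedIdeal.span {q₁, q₂, q₃, q₄} ≠ ⊤ := by
  subst hz hq₁ hq₂ hq₃ hq₄
  have hμ i j : IsUnit (μ i j) := (hμ0 i j).isUnit
  have h13 : μ 1 3 = μ 2 3 := h3424.symm
  have h03 : μ 0 3 ^ 2 = μ 2 3 := h2414.symm.trans h13
  have h02 : μ 0 2 ^ 2 = μ 2 3 := h1413.symm.trans h03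
  refine ⟨?_, ?_, ?_, ?_, ?_⟩
  · exact SkewAlg.isNormalElem_map_zgen_mul_zgen (RingHom.id _) Function.surjective_id hμ 0 1
  · rw [sq]
    exact SkewAlg.isNormalElem_map_zgen_mul_zgen _ (RingCon.mk'_surjective _) hμ 2 2
  · refine SkewAlg.isNormalElem_mk'_of_mul_zgen_sub_mem _ ?_
      (sq_sub_mul_skew_comm_mod SkewAlg.zgen_mul_zgen h34sq h23 h13 rfl h02 h03 _
        (TwoSidedIdeal.subset_span (by simp)))
    simp [Fin.forall_fin_succ, hμ0]
  · refine SkewAlg.isNormalElem_mk'_of_mul_zgen_sub_mem _ ?_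
      (sq_add_sq_sub_mul_skew_comm_mod SkewAlg.zgen_mul_zgen h34sq h23 h13 rfl h03 _
        (TwoSidedIdeal.subset_span (by simp)))
    simp [Fin.forall_fin_succ, hμ0]
  · exact SkewAlg.span_ne_top_of_augmentation_eq_zero (by simp)

theorem stmt12 (k : Type*) [Field k] [IsAlgClosed k] (hchar : (2 : k) ≠ 0)
    (μ : Fin 4 → Fin 4 → k)
    (hμ0 : ∀ i j, μ i j ≠ 0)
    (hμd : ∀ i, μ i i = 1)
    (hμi : ∀ i j, μ i j * μ j i = 1)
    (h23 : μ 1 2 = 1) (h34sq : (μ 2 3) ^ 2 = 1)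
    (h3424 : μ 2 3 = μ 1 3) (h2414 : μ 1 3 = (μ 0 3) ^ 2)
    (h1413 : (μ 0 3) ^ 2 = (μ 0 2) ^ 2)
    (z : Fin 4 → SkewAlg k 4 μ) (hz : z = zgen k 4 μ)
    (q₁ q₂ q₃ q₄ : SkewAlg k 4 μ)
    (hq₁ : q₁ = z 0 * z 1) (hq₂ : q₂ = (z 2) ^ 2)
    (hq₃ : q₃ = (z 0) ^ 2 - z 1 * z 3)
    (hq₄ : q₄ = (z 1) ^ 2 + (z 3) ^ 2 - z 1 * z 2) :
    IsNormalElem q₁ ∧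
    IsNormalElem ((TwoSidedIdeal.span {q₁}).ringCon.mk' q₂) ∧
    IsNormalElem ((TwoSidedIdeal.span {q₁, q₂}).ringCon.mk' q₃) ∧
    IsNormalElem ((TwoSidedIdeal.span {q₁, q₂, q₃}).ringCon.mk' q₄) ∧
    TwoSidedIdeal.span {q₁, q₂, q₃, q₄} ≠ ⊤ :=
  stmt12_general k μ hμ0 h23 h34sq h3424 h2414 h1413 z hz q₁ q₂ q₃ q₄ hq₁ hq₂ hq₃ hq₄
end
end
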